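/- Let U be a supertropical monoid and E a TE-relation on U. Then the quotient set U/E carries a unique structure of a supertropical monoid such that the quotient map π_E: U → U/E, x ↦ [x]_E, is a transmission. -/

import Mathlib

universe u v w

class STM (U : Type u) extends CommMonoid U, Zero U where
  zero_mul' : ∀ x : U, 0 * x = 0
  e : U
  e_idem : e * e = e
  ghost_zero : ∀ x : U, e * x = 0 → x = 0
  le : U → U → Prop
  le_refl : ∀ x : U, le x x
  le_trans : ∀ x y z : U, le x y → le y z → le x z
  le_total : ∀ x y : U, le x y ∨ le y x
  le_antisymm : ∀ x y : U, e * x = x → e * y = y → le x y → le y x → x = y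
  le_e : ∀ x y : U, le x y ↔ le (e * x) (e * y)
  mul_le_mul : ∀ x y z : U, le x y → le (x * z) (y * z)
  zero_le : ∀ x : U, le 0 x

namespace STM

variable {U : Type u} [STM U]

/-- `x` is a ghost element, i.e. `x ∈ eU`. -/
def Ghost (x : U) : Prop := e * x = x

/-- strict inequality for the ordering of the ghost ideal -/
def slt (x y : U) : Prop := le x y ∧ ¬ le y x

open scoped Classical in
/-- the forced addition on a supertropical monoid -/
noncomputable def add (x y : U) : U :=
  if slt (e * x) (e * y) then y
  else if slt (e * y) (e * x) then x
  else e * x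

/-- the supertropical monoid `U` "is" a (supertropical) semiring: the forced
addition is associative and distributive. -/
def IsSemiring (U : Type u) [STM U] : Prop :=
  (∀ x y z : U, add (add x y) z = add x (add y z)) ∧
  (∀ x y z : U, add x y * z = add (x * z) (y * z))

end STM

open STM

/-- A transmission between supertropical monoids. -/
structure IsTransmission {U : Type u} {V : Type v} [STM U] [STM V] (α : U → V) : Prop where
  map_zero : α 0 = 0
  map_one : α 1 = 1
  map_mul : ∀ x y : U, α (x * y) = α x * α y
  map_e : α (STM.e : U) = (STM.e : V)
  mono : ∀ x y : U, Ghost x → Ghost y → STM.le x y → STM.le (α x) (α y)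


/-- TE-relation on a supertropical monoid. -/
structure IsTE {U : Type u} [STM U] (E : U → U → Prop) : Prop where
  refl : ∀ x : U, E x x
  symm : ∀ x y : U, E x y → E y x
  trans : ∀ x y z : U, E x y → E y z → E x z
  mul_compat : ∀ x y z : U, E x y → E (x * z) (y * z)
  order_compat : ∀ x1 x2 x3 x4 : U, Ghost x1 → Ghost x2 → Ghost x3 → Ghost x4 →
    STM.le x1 x2 → STM.le x3 x4 → E x1 x4 → E x2 x3 → E x1 x2
  ghost_zero : ∀ x : U, E (STM.e * x) 0 → E x 0

/-!
Multiplication, `0`, `1` and `e` descend to `U/E` because `E` is multiplicative, and `TE3` gives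
the ghost-zero axiom there. The order is `[x] ≤ [y]` iff `ex ≤ ey` or `ex ~ ey`; it is well defined
and transitive because the `E`-classes are convex in `eU` (`TE2`), and antisymmetric by
construction. Uniqueness holds for any surjective transmission `α`: it forces the multiplication,
`0` and `e` of its target, and also the order, since `α x ≤ α y` iff `ex ≤ ey` or `α (ex) = α (ey)`.
-/

namespace STM

variable {U : Type u} [STM U]

theorem mul_zero' (x : U) : x * 0 = 0 := by
  rw [mul_comm]; exact zero_mul' x

theorem e_mul_e_mul (x : U) : (e : U) * (e * x) = e * x := by
  rw [← mul_assoc, e_idem]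

theorem ghost_e_mul (x : U) : Ghost ((e : U) * x) :=
  e_mul_e_mul x

theorem ext_of_toCommMonoid {V : Type v} {S T : STM V}
    (hmul : (letI := S; HMul.hMul : V → V → V) = (letI := T; HMul.hMul : V → V → V))
    (hzero : S.zero = T.zero) (he : S.e = T.e) (hle : S.le = T.le) : S = T := by
  have hcm : S.toCommMonoid = T.toCommMonoid := CommMonoid.ext hmul
  obtain @⟨_, ⟨_⟩⟩ := S
  obtain @⟨_, ⟨_⟩⟩ := T
  cases hcm
  cases hzero
  cases he
  cases hle
  rfl

end STM

namespace IsTransmission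

variable {U : Type u} {V : Type v} [STM U] [STM V] {α : U → V}

theorem ghost_map_e_mul (hα : IsTransmission α) (x : U) : Ghost (α (e * x)) := by
  rw [Ghost, ← hα.map_e, ← hα.map_mul, e_mul_e_mul]

theorem le_map_iff (hα : IsTransmission α) (x y : U) :
    le (α x) (α y) ↔ le ((e : U) * x) (e * y) ∨ α (e * x) = α (e * y) := by
  rw [le_e, ← hα.map_e, ← hα.map_mul, ← hα.map_mul]
  constructor
  · intro h
    refine (le_total ((e : U) * x) (e * y)).imp id fun hyx => ?_
    exact le_antisymm _ _ (hα.ghost_map_e_mul x) (hα.ghost_map_e_mul y) h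
      (hα.mono _ _ (ghost_e_mul y) (ghost_e_mul x) hyx)
  · rintro (h | h)
    · exact hα.mono _ _ (ghost_e_mul x) (ghost_e_mul y) h
    · exact h ▸ le_refl _

end IsTransmission

theorem IsTransmission.stm_eq_of_surjective {U : Type u} {V : Type v} [STM U] {α : U → V}
    (hsurj : Function.Surjective α) {S T : STM V}
    (hS : @IsTransmission U V _ S α) (hT : @IsTransmission U V _ T α) : S = T := by
  have hle (x y : U) : (letI := S; le (α x) (α y)) ↔ (letI := T; le (α x) (α y)) :=
    (@le_map_iff U V _ S α hS x y).trans (@le_map_iff U V _ T α hT x y).symm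
  obtain ⟨hS_zero, -, hS_mul, hS_e, -⟩ := hS
  obtain ⟨hT_zero, -, hT_mul, hT_e, -⟩ := hT
  refine STM.ext_of_toCommMonoid ?_ (hS_zero.symm.trans hT_zero) (hS_e.symm.trans hT_e) ?_
  · funext a b
    obtain ⟨x, rfl⟩ := hsurj a
    obtain ⟨y, rfl⟩ := hsurj b
    exact (hS_mul x y).symm.trans (hT_mul x y)
  · funext a b
    obtain ⟨x, rfl⟩ := hsurj a
    obtain ⟨y, rfl⟩ := hsurj b
    exact propext (hle x y)

namespace IsTE

variable {U : Type u} [STM U] {E : U → U → Prop}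

theorem equivalence (hE : IsTE E) : Equivalence E :=
  ⟨hE.refl, hE.symm _ _, hE.trans _ _ _⟩

theorem rel_of_quot_mk_eq (hE : IsTE E) {x y : U} (h : Quot.mk E x = Quot.mk E y) : E x y :=
  hE.equivalence.eqvGen_iff.mp (Quot.eqvGen_exact h)

theorem mul_left (hE : IsTE E) (z : U) {x y : U} (h : E x y) : E (z * x) (z * y) := by
  rw [mul_comm z x, mul_comm z y]
  exact hE.mul_compat _ _ _ h

/-- The classes of `E` are order-convex in the ghost ideal. -/
theorem rel_of_le_of_le (hE : IsTE E) {a b c : U} (ga : Ghost a) (gb : Ghost b) (gc : Ghost c)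
    (hab : le a b) (hbc : le b c) (hac : E a c) : E a b :=
  hE.order_compat a b b c ga gb gb gc hab hbc hac (hE.refl b)

end IsTE

namespace STM

variable {U : Type u} [STM U] {E : U → U → Prop}

def QuotLE (E : U → U → Prop) (x y : U) : Prop :=
  le ((e : U) * x) (e * y) ∨ E ((e : U) * x) (e * y)

theorem quotLE_of_rel (hE : IsTE E) {x y : U} (h : E x y) : QuotLE E x y :=
  Or.inr (hE.mul_left e h)

theorem quotLE_trans (hE : IsTE E) {x y z : U} (hxy : QuotLE E x y) (hyz : QuotLE E y z) :
    QuotLE E x z := by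
  have gx := ghost_e_mul x
  have gy := ghost_e_mul y
  have gz := ghost_e_mul z
  refine (le_total ((e : U) * x) (e * z)).imp id fun hzx => ?_
  rcases hxy with hxy | hxy <;> rcases hyz with hyz | hyz
  · exact le_antisymm _ _ gx gz (le_trans _ _ _ hxy hyz) hzx ▸ hE.refl _
  · exact hE.symm _ _ (hE.rel_of_le_of_le gz gx gy hzx hxy (hE.symm _ _ hyz))
  · exact hE.trans _ _ _ hxy (hE.rel_of_le_of_le gy gz gx hyz hzx (hE.symm _ _ hxy))
  · exact hE.trans _ _ _ hxy hyz

theorem quotLE_congr (hE : IsTE E) {x x' y y' : U} (hx : E x x') (hy : E y y') :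
    QuotLE E x y = QuotLE E x' y' := by
  have h (a b : U) (hab : E a b) : QuotLE E a b ∧ QuotLE E b a :=
    ⟨quotLE_of_rel hE hab, quotLE_of_rel hE (hE.symm _ _ hab)⟩
  refine propext ⟨fun hxy => ?_, fun hxy => ?_⟩
  · exact quotLE_trans hE (quotLE_trans hE (h x x' hx).2 hxy) (h y y' hy).1
  · exact quotLE_trans hE (quotLE_trans hE (h x x' hx).1 hxy) (h y y' hy).2

theorem rel_of_quotLE_of_quotLE (hE : IsTE E) {x y : U} (hxy : QuotLE E x y)
    (hyx : QuotLE E y x) : E ((e : U) * x) (e * y) := by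
  rcases hxy with hxy | hxy
  · rcases hyx with hyx | hyx
    · exact le_antisymm _ _ (ghost_e_mul x) (ghost_e_mul y) hxy hyx ▸ hE.refl _
    · exact hE.symm _ _ hyx
  · exact hxy

theorem quotLE_e_mul_iff (x y : U) : QuotLE E (e * x) (e * y) ↔ QuotLE E x y := by
  rw [QuotLE, QuotLE, e_mul_e_mul, e_mul_e_mul]

theorem quotLE_mul_right (hE : IsTE E) {x y : U} (z : U) (h : QuotLE E x y) :
    QuotLE E (x * z) (y * z) := by
  rw [QuotLE, ← mul_assoc, ← mul_assoc]
  exact h.imp (mul_le_mul _ _ z) (hE.mul_compat _ _ z)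

abbrev quotSTM (hE : IsTE E) : STM (Quot E) where
  mul := Quot.map₂ (· * ·) (fun z _ _ => hE.mul_left z) (fun _ _ z => hE.mul_compat _ _ z)
  one := Quot.mk E 1
  mul_assoc := by rintro ⟨x⟩ ⟨y⟩ ⟨z⟩; exact congrArg (Quot.mk E) (mul_assoc x y z)
  one_mul := by rintro ⟨x⟩; exact congrArg (Quot.mk E) (one_mul x)
  mul_one := by rintro ⟨x⟩; exact congrArg (Quot.mk E) (mul_one x)
  mul_comm := by rintro ⟨x⟩ ⟨y⟩; exact congrArg (Quot.mk E) (mul_comm x y)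
  zero := Quot.mk E 0
  zero_mul' := by rintro ⟨x⟩; exact congrArg (Quot.mk E) (zero_mul' x)
  e := Quot.mk E e
  e_idem := congrArg (Quot.mk E) e_idem
  ghost_zero := by rintro ⟨x⟩ h; exact Quot.sound (hE.ghost_zero x (hE.rel_of_quot_mk_eq h))
  le := Quot.lift₂ (QuotLE E) (fun _ _ _ => quotLE_congr hE (hE.refl _))
    (fun _ _ _ h => quotLE_congr hE h (hE.refl _))
  le_refl := by rintro ⟨x⟩; exact Or.inl (le_refl _)
  le_trans := by rintro ⟨x⟩ ⟨y⟩ ⟨z⟩; exact quotLE_trans hE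
  le_total := by rintro ⟨x⟩ ⟨y⟩; exact (le_total ((e : U) * x) (e * y)).imp Or.inl Or.inl
  le_antisymm := by
    rintro ⟨x⟩ ⟨y⟩ (gx : Quot.mk E (e * x) = _) (gy : Quot.mk E (e * y) = _) hxy hyx
    rw [← gx, ← gy]
    exact Quot.sound (rel_of_quotLE_of_quotLE hE hxy hyx)
  le_e := by rintro ⟨x⟩ ⟨y⟩; exact (quotLE_e_mul_iff x y).symm
  mul_le_mul := by rintro ⟨x⟩ ⟨y⟩ ⟨z⟩; exact quotLE_mul_right hE z
  zero_le := by rintro ⟨x⟩; exact Or.inl ((mul_zero' (e : U)).symm ▸ zero_le _)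

theorem isTransmission_quot_mk (hE : IsTE E) :
    @IsTransmission U (Quot E) _ (quotSTM hE) (Quot.mk E) :=
  @IsTransmission.mk U (Quot E) _ (quotSTM hE) _ rfl rfl (fun _ _ => rfl) rfl
    fun x y _ _ h => Or.inl ((le_e x y).mp h)

end STM

/-- For a TE-relation `E` on a supertropical monoid `U`, the quotient `U/E` carries a
unique structure of a supertropical monoid making the quotient map a transmission. -/
theorem quotient_unique_stm_structure {U : Type u} [STM U] (E : U → U → Prop)
    (hE : IsTE E) :
    ∃! S : STM (Quot E), @IsTransmission U (Quot E) _ S (Quot.mk E) :=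
  ⟨quotSTM hE, isTransmission_quot_mk hE,
    fun _ hS =>
      IsTransmission.stm_eq_of_surjective Quot.mk_surjective hS (isTransmission_quot_mk hE)⟩
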